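/- Let G be a totally disconnected locally compact Hausdorff topological group, g ∈ G, and U a compact open subgroup of G. The following are equivalent: (1) U = U₊U₋ (as sets, where U₊U₋ is the pointwise product); (2) U is tidy above for g, i.e., [gU₊g⁻¹ : U₊] = [gUg⁻¹ : gUg⁻¹ ∩ U]; (3) U = U₊ · (U ∩ g⁻¹Ug) (as sets). -/

import Mathlib

open MeasureTheory Pointwise

variable {G : Type*}

/-- The conjugate subgroup `gUg⁻¹`. -/
def conjSubgroup [Group G] (g : G) (U : Subgroup G) : Subgroup G :=
  U.map (MulAut.conj g).toMonoidHom

/-- A subgroup is compact open if its carrier set is compact and open. -/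
def Subgroup.IsCompactOpen [Group G] [TopologicalSpace G] (U : Subgroup G) : Prop :=
  IsCompact (U : Set G) ∧ IsOpen (U : Set G)

/-- `U₊ = ⋂_{n ≥ 0} gⁿ U g⁻ⁿ`. -/
def plusSubgroup [Group G] (g : G) (U : Subgroup G) : Subgroup G :=
  ⨅ n : ℕ, conjSubgroup (g ^ n) U

/-- `U₋ = ⋂_{n ≥ 0} g⁻ⁿ U gⁿ`. -/
def minusSubgroup [Group G] (g : G) (U : Subgroup G) : Subgroup G :=
  ⨅ n : ℕ, conjSubgroup (g⁻¹ ^ n) U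

/-- `U` is tidy above for `g` if `[gU₊g⁻¹ : U₊] = [gUg⁻¹ : gUg⁻¹ ∩ U]`. -/
def TidyAbove [Group G] (g : G) (U : Subgroup G) : Prop :=
  (plusSubgroup g U).relIndex (conjSubgroup g (plusSubgroup g U)) = U.relIndex (conjSubgroup g U)

/-- `U₊₊ = ⋃_{n ≥ 0} gⁿ U₊ g⁻ⁿ` as a set. -/
def plusPlusSet [Group G] (g : G) (U : Subgroup G) : Set G :=
  ⋃ n : ℕ, ((conjSubgroup (g ^ n) (plusSubgroup g U) : Subgroup G) : Set G)

/-- `U₋₋ = ⋃_{n ≥ 0} g⁻ⁿ U₋ gⁿ` as a set. -/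
def minusMinusSet [Group G] (g : G) (U : Subgroup G) : Set G :=
  ⋃ n : ℕ, ((conjSubgroup (g⁻¹ ^ n) (minusSubgroup g U) : Subgroup G) : Set G)

/-- `U` is tidy below for `g` if `U₊₊` and `U₋₋` are closed. -/
def TidyBelow [Group G] [TopologicalSpace G] (g : G) (U : Subgroup G) : Prop :=
  IsClosed (plusPlusSet g U) ∧ IsClosed (minusMinusSet g U)

/-- `U` is tidy for `g` if it is tidy above and tidy below for `g`. -/
def Tidy [Group G] [TopologicalSpace G] (g : G) (U : Subgroup G) : Prop :=
  TidyAbove g U ∧ TidyBelow g U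

/-!
Write `W = U ∩ g⁻¹Ug`. Conjugation by `g⁻¹` maps `U₊` onto `W ∩ U₊`, so tidiness above says
`[U₊ : U₊ ∩ W] = [U : W]`. Since `W` is open in the compact group `U`, this index is finite, and the
equality holds exactly when `U₊` meets every coset of `W` in `U`, i.e. when `U = U₊W`.

As `U₋ ≤ W`, the factorisation `U = U₊U₋` gives `U = U₊W`. Conversely, from `U = U₊W` one gets
`U = U₊(U ∩ g⁻¹Ug ∩ ⋯ ∩ g⁻ⁿUgⁿ)` for every `n`, by conjugating the second factor back into `U`.
These are decreasing closed subgroups with intersection `U₋`, and compactness of `U₊` lets the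
factorisation pass to the intersection.
-/

section Conjugation

variable [Group G] {a g x : G} {U : Subgroup G}

lemma mem_conjSubgroup : x ∈ conjSubgroup a U ↔ a⁻¹ * x * a ∈ U :=
  Subgroup.mem_map_equiv.trans (by simp)

lemma coe_conjSubgroup (a : G) (U : Subgroup G) :
    (conjSubgroup a U : Set G) = (fun x ↦ a⁻¹ * x * a) ⁻¹' U :=
  Set.ext fun _ ↦ mem_conjSubgroup

@[simp]
lemma conjSubgroup_one (U : Subgroup G) : conjSubgroup 1 U = U := by
  ext; simp [mem_conjSubgroup]

lemma conjSubgroup_conjSubgroup (a b : G) (U : Subgroup G) :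
    conjSubgroup a (conjSubgroup b U) = conjSubgroup (a * b) U := by
  ext; simp [mem_conjSubgroup, mul_assoc]

lemma conjSubgroup_iInf {ι : Sort*} (a : G) (H : ι → Subgroup G) :
    conjSubgroup a (⨅ i, H i) = ⨅ i, conjSubgroup a (H i) := by
  ext; simp only [mem_conjSubgroup, Subgroup.mem_iInf]

lemma relIndex_conjSubgroup (a : G) (H K : Subgroup G) :
    (conjSubgroup a H).relIndex (conjSubgroup a K) = H.relIndex K :=
  Subgroup.relIndex_map_map_of_injective H K (MulAut.conj a).injective

lemma relIndex_conjSubgroup_right (a : G) (H K : Subgroup G) :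
    H.relIndex (conjSubgroup a K) = (conjSubgroup a⁻¹ H).relIndex K := by
  rw [← relIndex_conjSubgroup a⁻¹, conjSubgroup_conjSubgroup, inv_mul_cancel, conjSubgroup_one]

lemma mem_plusSubgroup : x ∈ plusSubgroup g U ↔ ∀ n : ℕ, x ∈ conjSubgroup (g ^ n) U :=
  Subgroup.mem_iInf

lemma mem_minusSubgroup : x ∈ minusSubgroup g U ↔ ∀ n : ℕ, x ∈ conjSubgroup (g⁻¹ ^ n) U :=
  Subgroup.mem_iInf

lemma plusSubgroup_le : plusSubgroup g U ≤ U := fun _ hx ↦ by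
  simpa using mem_plusSubgroup.mp hx 0

lemma minusSubgroup_le_inf : minusSubgroup g U ≤ U ⊓ conjSubgroup g⁻¹ U := fun _ hx ↦
  ⟨by simpa using mem_minusSubgroup.mp hx 0, by simpa using mem_minusSubgroup.mp hx 1⟩

lemma conjSubgroup_inv_plusSubgroup :
    conjSubgroup g⁻¹ (plusSubgroup g U) = (U ⊓ conjSubgroup g⁻¹ U) ⊓ plusSubgroup g U := by
  ext x
  rw [plusSubgroup, conjSubgroup_iInf, Subgroup.mem_iInf, ← Nat.and_forall_add_one]
  simp only [conjSubgroup_conjSubgroup, pow_zero, mul_one, pow_succ', inv_mul_cancel_left,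
    Subgroup.mem_inf, Subgroup.mem_iInf]
  exact ⟨fun ⟨h1, h⟩ ↦ ⟨⟨by simpa using h 0, h1⟩, h⟩, fun ⟨⟨_, h1⟩, h⟩ ↦ ⟨h1, h⟩⟩

lemma conjSubgroup_inv_plusSubgroup_le : conjSubgroup g⁻¹ (plusSubgroup g U) ≤ plusSubgroup g U :=
  conjSubgroup_inv_plusSubgroup.trans_le inf_le_right

end Conjugation

section Index

variable [Group G] {A B N : Subgroup G}

lemma coe_eq_mul_iff_subset (hAB : A ≤ B) (hNB : N ≤ B) :
    (B : Set G) = A * N ↔ (B : Set G) ⊆ A * N :=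
  ⟨Eq.subset, fun h ↦ h.antisymm (Set.mul_subset_iff.mpr fun _ ha _ hn ↦
    B.mul_mem (hAB ha) (hNB hn))⟩

lemma surjective_quotientSubgroupOfEmbeddingOfLE_iff (hAB : A ≤ B) :
    Function.Surjective (Subgroup.quotientSubgroupOfEmbeddingOfLE N hAB) ↔
      (B : Set G) ⊆ A * N := by
  refine ⟨fun h b hb ↦ ?_, fun h ↦ QuotientGroup.mk_surjective.forall.mpr fun b ↦ ?_⟩
  · obtain ⟨x, hx⟩ := h (QuotientGroup.mk ⟨b, hb⟩)
    obtain ⟨a, rfl⟩ := QuotientGroup.mk_surjective x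
    rw [Subgroup.quotientSubgroupOfEmbeddingOfLE_apply_mk, QuotientGroup.eq,
      Subgroup.mem_subgroupOf] at hx
    exact ⟨a, a.2, _, hx, mul_inv_cancel_left _ _⟩
  · obtain ⟨a, ha, n, hn, hb⟩ := h b.2
    refine ⟨QuotientGroup.mk ⟨a, ha⟩, ?_⟩
    rw [Subgroup.quotientSubgroupOfEmbeddingOfLE_apply_mk, QuotientGroup.eq,
      Subgroup.mem_subgroupOf]
    simpa [← hb] using hn

lemma relIndex_eq_relIndex_iff_coe_eq_mul (hAB : A ≤ B) (hNB : N ≤ B) (hN : N.relIndex B ≠ 0) :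
    N.relIndex A = N.relIndex B ↔ (B : Set G) = A * N := by
  have : Finite (B ⧸ N.subgroupOf B) := Nat.finite_of_card_ne_zero hN
  set f := Subgroup.quotientSubgroupOfEmbeddingOfLE N hAB
  rw [coe_eq_mul_iff_subset hAB hNB, ← surjective_quotientSubgroupOfEmbeddingOfLE_iff hAB]
  exact ⟨fun h ↦ (f.injective.bijective_of_nat_card_le h.ge).surjective,
    fun h ↦ Nat.card_eq_of_bijective f ⟨f.injective, h⟩⟩

end Index

section Tidy

variable [Group G] {g : G} {U : Subgroup G}

lemma tidyAbove_iff_relIndex :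
    TidyAbove g U ↔
      (U ⊓ conjSubgroup g⁻¹ U).relIndex (plusSubgroup g U) =
        (U ⊓ conjSubgroup g⁻¹ U).relIndex U := by
  rw [TidyAbove, relIndex_conjSubgroup_right, relIndex_conjSubgroup_right,
    conjSubgroup_inv_plusSubgroup, Subgroup.inf_relIndex_right, Subgroup.inf_relIndex_left]

end Tidy

section PartialMinus

variable [Group G] {g x : G} {U : Subgroup G}

/-- `U ∩ g⁻¹Ug ∩ ⋯ ∩ g⁻ⁿUgⁿ`. -/
def partialMinusSubgroup (g : G) (U : Subgroup G) : ℕ → Subgroup G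
  | 0 => U
  | n + 1 => U ⊓ conjSubgroup g⁻¹ (partialMinusSubgroup g U n)

lemma mem_partialMinusSubgroup {n : ℕ} :
    x ∈ partialMinusSubgroup g U n ↔ ∀ k ≤ n, x ∈ conjSubgroup (g⁻¹ ^ k) U := by
  induction n generalizing x with
  | zero => simp [partialMinusSubgroup]
  | succ n ih =>
    have hsucc (k : ℕ) : x ∈ conjSubgroup (g⁻¹ ^ (k + 1)) U ↔
        g⁻¹⁻¹ * x * g⁻¹ ∈ conjSubgroup (g⁻¹ ^ k) U := by
      rw [pow_succ', ← conjSubgroup_conjSubgroup, mem_conjSubgroup]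
    rw [partialMinusSubgroup, Subgroup.mem_inf, mem_conjSubgroup, ih]
    refine ⟨fun ⟨h0, h⟩ k hk ↦ ?_, fun h ↦ ⟨by simpa using h 0 (Nat.zero_le _),
      fun k hk ↦ (hsucc k).mp (h (k + 1) (by omega))⟩⟩
    cases k with
    | zero => simpa using h0
    | succ k => exact (hsucc k).mpr (h k (by omega))

lemma antitone_coe_partialMinusSubgroup :
    Antitone fun n ↦ (partialMinusSubgroup g U n : Set G) :=
  fun _ _ hmn _ hx ↦ mem_partialMinusSubgroup.mpr fun k hk ↦
    mem_partialMinusSubgroup.mp hx k (hk.trans hmn)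

lemma iInter_partialMinusSubgroup :
    ⋂ n, (partialMinusSubgroup g U n : Set G) = minusSubgroup g U := by
  ext x
  simp only [Set.mem_iInter, SetLike.mem_coe, mem_partialMinusSubgroup, mem_minusSubgroup]
  exact ⟨fun h k ↦ h k k le_rfl, fun h _ k _ ↦ h k⟩

lemma subset_plusSubgroup_mul_partialMinusSubgroup
    (h : (U : Set G) ⊆ plusSubgroup g U * (U ⊓ conjSubgroup g⁻¹ U : Subgroup G)) (n : ℕ) :
    (U : Set G) ⊆ plusSubgroup g U * partialMinusSubgroup g U n := by
  induction n with
  | zero => exact fun u hu ↦ ⟨1, one_mem _, u, hu, one_mul u⟩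
  | succ n ih =>
    -- `u = a (g⁻¹bg)` with `b ∈ U`, `b = c d` by induction, so `u = (a (g⁻¹cg)) (g⁻¹dg)`.
    intro u hu
    obtain ⟨a, ha, _, ⟨hbU, b, hb, rfl⟩, rfl⟩ := h hu
    obtain ⟨c, hc, d, hd, rfl⟩ := ih hb
    have hc' : MulAut.conj g⁻¹ c ∈ plusSubgroup g U :=
      conjSubgroup_inv_plusSubgroup_le (Subgroup.mem_map_of_mem _ hc)
    have hd' : MulAut.conj g⁻¹ d = (MulAut.conj g⁻¹ c)⁻¹ * MulAut.conj g⁻¹ (c * d) := by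
      rw [map_mul, inv_mul_cancel_left]
    refine ⟨a * MulAut.conj g⁻¹ c, mul_mem ha hc', MulAut.conj g⁻¹ d,
      ⟨?_, Subgroup.mem_map_of_mem _ hd⟩, by simp [mul_assoc]⟩
    rw [hd']
    exact U.mul_mem (U.inv_mem (plusSubgroup_le hc')) hbU

end PartialMinus

section Topology

variable [Group G] [TopologicalSpace G] [IsTopologicalGroup G]

lemma relIndex_ne_zero_of_isOpen_of_isCompact {H K : Subgroup G} (hH : IsOpen (H : Set G))
    (hK : IsCompact (K : Set G)) : H.relIndex K ≠ 0 :=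
  have : CompactSpace K := isCompact_iff_compactSpace.mp hK
  have := (H.subgroupOf K).quotient_finite_of_isOpen (Subgroup.subgroupOf_isOpen K H hH)
  Subgroup.index_ne_zero_of_finite

lemma IsCompact.mul_iInter_of_directed {ι : Type*} [Nonempty ι] {K : Set G} (hK : IsCompact K)
    {F : ι → Set G} (hFd : Directed (· ⊇ ·) F) (hFc : ∀ i, IsClosed (F i)) :
    K * ⋂ i, F i = ⋂ i, K * F i := by
  refine (Set.mul_iInter_subset K F).antisymm fun u hu ↦ ?_
  obtain ⟨x, hxK, hx⟩ : (K ∩ ⋂ i, (fun x ↦ x⁻¹ * u) ⁻¹' F i).Nonempty := by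
    by_contra! h
    obtain ⟨i, hi⟩ := hK.elim_directed_family_closed (fun i ↦ (fun x ↦ x⁻¹ * u) ⁻¹' F i)
      (fun i ↦ (hFc i).preimage (continuous_inv.mul continuous_const)) h
      (hFd.mono_comp (g := Set.preimage fun x ↦ x⁻¹ * u) _ fun _ _ ↦ Set.preimage_mono)
    obtain ⟨a, ha, b, hb, rfl⟩ := Set.mem_iInter.mp hu i
    exact hi.subset ⟨ha, by simpa using hb⟩
  exact ⟨x, hxK, x⁻¹ * u, Set.mem_iInter.mpr fun i ↦ Set.mem_iInter.mp hx i,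
    mul_inv_cancel_left x u⟩

variable {g : G} {U : Subgroup G}

lemma isOpen_conjSubgroup (a : G) (hU : IsOpen (U : Set G)) :
    IsOpen (conjSubgroup a U : Set G) := by
  rw [coe_conjSubgroup]
  exact hU.preimage (by fun_prop)

lemma isOpen_partialMinusSubgroup (hU : IsOpen (U : Set G)) (n : ℕ) :
    IsOpen (partialMinusSubgroup g U n : Set G) := by
  induction n with
  | zero => exact hU
  | succ n ih => exact hU.inter (isOpen_conjSubgroup _ ih)

lemma isCompact_plusSubgroup (hU : U.IsCompactOpen) : IsCompact (plusSubgroup g U : Set G) := by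
  refine hU.1.of_isClosed_subset ?_ plusSubgroup_le
  rw [plusSubgroup, Subgroup.coe_iInf]
  exact isClosed_iInter fun n ↦ Subgroup.isClosed_of_isOpen _ (isOpen_conjSubgroup _ hU.2)

end Topology

section TidyAbove

variable [Group G] [TopologicalSpace G] [IsTopologicalGroup G] {g : G} {U : Subgroup G}

lemma tidyAbove_iff_coe_eq_plusSubgroup_mul_inf (hU : U.IsCompactOpen) :
    TidyAbove g U ↔ (U : Set G) = plusSubgroup g U * (U ⊓ conjSubgroup g⁻¹ U : Subgroup G) :=
  tidyAbove_iff_relIndex.trans <| relIndex_eq_relIndex_iff_coe_eq_mul plusSubgroup_le inf_le_left <|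
    relIndex_ne_zero_of_isOpen_of_isCompact (hU.2.inter (isOpen_conjSubgroup _ hU.2)) hU.1

lemma coe_eq_plusSubgroup_mul_minusSubgroup_iff (hU : U.IsCompactOpen) :
    (U : Set G) = plusSubgroup g U * minusSubgroup g U ↔
      (U : Set G) = plusSubgroup g U * (U ⊓ conjSubgroup g⁻¹ U : Subgroup G) := by
  rw [coe_eq_mul_iff_subset plusSubgroup_le (minusSubgroup_le_inf.trans inf_le_left),
    coe_eq_mul_iff_subset plusSubgroup_le inf_le_left]
  refine ⟨fun h ↦ h.trans (Set.mul_subset_mul_left minusSubgroup_le_inf), fun h ↦ ?_⟩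
  rw [← iInter_partialMinusSubgroup, (isCompact_plusSubgroup hU).mul_iInter_of_directed
    antitone_coe_partialMinusSubgroup.directed_ge
    fun n ↦ Subgroup.isClosed_of_isOpen _ (isOpen_partialMinusSubgroup hU.2 n)]
  exact Set.subset_iInter (subset_plusSubgroup_mul_partialMinusSubgroup h)

end TidyAbove

theorem tidyAbove_characterisations_general
    [Group G] [TopologicalSpace G] [IsTopologicalGroup G]
    (g : G) (U : Subgroup G) (hU : U.IsCompactOpen) :
    ((U : Set G) = (plusSubgroup g U : Set G) * (minusSubgroup g U : Set G) ↔ TidyAbove g U) ∧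
    (TidyAbove g U ↔
      (U : Set G) = (plusSubgroup g U : Set G) * ((U ⊓ conjSubgroup g⁻¹ U : Subgroup G) : Set G)) :=
  ⟨(coe_eq_plusSubgroup_mul_minusSubgroup_iff hU).trans
    (tidyAbove_iff_coe_eq_plusSubgroup_mul_inf hU).symm,
    tidyAbove_iff_coe_eq_plusSubgroup_mul_inf hU⟩

/-- Characterisations of tidiness above:
`U = U₊U₋` ↔ `U` tidy above ↔ `U = U₊ (U ∩ g⁻¹Ug)`. -/
theorem tidyAbove_characterisations
    [Group G] [TopologicalSpace G] [IsTopologicalGroup G] [LocallyCompactSpace G] [T2Space G]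
    [TotallyDisconnectedSpace G]
    (g : G) (U : Subgroup G) (hU : U.IsCompactOpen) :
    ((U : Set G) = (plusSubgroup g U : Set G) * (minusSubgroup g U : Set G) ↔ TidyAbove g U) ∧
    (TidyAbove g U ↔
      (U : Set G) = (plusSubgroup g U : Set G) * ((U ⊓ conjSubgroup g⁻¹ U : Subgroup G) : Set G)) :=
  tidyAbove_characterisations_general g U hU
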